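/- For every complete N-invariant flag F, the subspaces F'_i := (F_i ∩ P) + π_Q(F_i), where π_Q : V → Q is the projection onto Q along P, form a torus-fixed complete N-invariant flag; consequently F' = Φ(w) for a unique weight sequence w. -/

import Mathlib

open Module

namespace Springer

/-- The nilpotent endomorphism `N` of `ℂ^n` with two Jordan blocks of sizes `n-k` and `k`:
the basis vectors `e 0, …, e (n-k-1)` are `p 1, …, p (n-k)` and
`e (n-k), …, e (n-1)` are `q 1, …, q k`; `N` shifts each block down by one. -/
def Nmap (n k : ℕ) : (Fin n → ℂ) →ₗ[ℂ] (Fin n → ℂ) where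
  toFun x j := if h : j.val + 1 < n ∧ j.val + 1 ≠ n - k then x ⟨j.val + 1, h.1⟩ else 0
  map_add' x y := by
    funext j
    by_cases h : j.val + 1 < n ∧ j.val + 1 ≠ n - k <;> simp [h]
  map_smul' c x := by
    funext j
    by_cases h : j.val + 1 < n ∧ j.val + 1 ≠ n - k <;> simp [h]

/-- `span (p 1, …, p t, q 1, …, q b)` inside `ℂ^n`. -/
noncomputable def spanPQ (n k t b : ℕ) : Submodule ℂ (Fin n → ℂ) :=
  Submodule.span ℂ {x | ∃ j : Fin n,
    ((j.val < t ∧ j.val < n - k) ∨ (n - k ≤ j.val ∧ j.val < n - k + b)) ∧ x = Pi.single j 1}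

/-- `P = span (p 1, …, p (n-k))`. -/
noncomputable def Pmod (n k : ℕ) : Submodule ℂ (Fin n → ℂ) := spanPQ n k (n - k) 0

/-- `Q = span (q 1, …, q k)`. -/
noncomputable def Qmod (n k : ℕ) : Submodule ℂ (Fin n → ℂ) := spanPQ n k 0 k

/-- The projection of `V` onto `Q` along `P`. -/
def projQ (n k : ℕ) : (Fin n → ℂ) →ₗ[ℂ] (Fin n → ℂ) where
  toFun x j := if n - k ≤ j.val then x j else 0
  map_add' x y := by
    funext j
    by_cases h : n - k ≤ j.val
    · simp only [Pi.add_apply, if_pos h]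
    · simp only [Pi.add_apply, if_neg h, add_zero]
  map_smul' c x := by
    funext j
    by_cases h : n - k ≤ j.val
    · simp only [Pi.smul_apply, smul_eq_mul, if_pos h, RingHom.id_apply]
    · simp only [Pi.smul_apply, smul_eq_mul, if_neg h, mul_zero, RingHom.id_apply]

/-- A complete `N`-invariant flag in `ℂ^n`: a chain `F 0 ⊆ ⋯ ⊆ F n` with `dim F i = i`
(thus `F 0 = 0` and `F n = V`) and `N (F (i+1)) ⊆ F i`. -/
def IsNFlag (n k : ℕ) (F : Fin (n + 1) → Submodule ℂ (Fin n → ℂ)) : Prop :=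
  Monotone F ∧ (∀ i : Fin (n + 1), finrank ℂ (F i) = i.val) ∧
    ∀ i : Fin n, Submodule.map (Nmap n k) (F i.succ) ≤ F i.castSucc

/-- A flag is torus fixed if each subspace is spanned by its intersections with `P` and `Q`. -/
def TorusFixed (n k : ℕ) (F : Fin (n + 1) → Submodule ℂ (Fin n → ℂ)) : Prop :=
  ∀ i, F i = (F i ⊓ Pmod n k) ⊔ (F i ⊓ Qmod n k)

/-- A weight sequence (row-strict tableau) of shape `(n-k, k)`:
`true` encodes `∨` and `false` encodes `∧`; there are exactly `k` symbols `∨`. -/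
def IsWeightSeq (n k : ℕ) (w : Fin n → Bool) : Prop :=
  (Finset.univ.filter fun i => w i = true).card = k

/-- `t i` = number of 1-based positions `≤ i` labelled `∧`. -/
def tcount (n : ℕ) (w : Fin n → Bool) (i : ℕ) : ℕ :=
  (Finset.univ.filter fun j : Fin n => j.val < i ∧ w j = false).card

/-- `b i` = number of 1-based positions `≤ i` labelled `∨`. -/
def bcount (n : ℕ) (w : Fin n → Bool) (i : ℕ) : ℕ :=
  (Finset.univ.filter fun j : Fin n => j.val < i ∧ w j = true).card

/-- The torus fixed flag `Φ(w)` attached to a weight sequence `w`: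
`Φ(w) i = span (p 1, …, p (t i), q 1, …, q (b i))`. -/
noncomputable def PhiFlag (n k : ℕ) (w : Fin n → Bool) : Fin (n + 1) → Submodule ℂ (Fin n → ℂ) :=
  fun i => spanPQ n k (tcount n w i.val) (bcount n w i.val)

/-- A crossingless matching on the points `1, …, n`: a set of cups `(i, j)` with
`1 ≤ i < j ≤ n`, pairwise disjoint, mutually non-crossing, and such that no unmatched
point (ray) lies strictly inside any cup. -/
structure CrossinglessMatching (n : ℕ) where
  cups : Finset (ℕ × ℕ)
  mem_range : ∀ p ∈ cups, 1 ≤ p.1 ∧ p.1 < p.2 ∧ p.2 ≤ n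
  disjoint' : ∀ p ∈ cups, ∀ q ∈ cups, p ≠ q →
    p.1 ≠ q.1 ∧ p.1 ≠ q.2 ∧ p.2 ≠ q.1 ∧ p.2 ≠ q.2
  noncross : ∀ p ∈ cups, ∀ q ∈ cups, ¬(p.1 < q.1 ∧ q.1 < p.2 ∧ p.2 < q.2)
  rays_outside : ∀ p ∈ cups, ∀ m : ℕ, p.1 < m → m < p.2 → ∃ q ∈ cups, m = q.1 ∨ m = q.2

/-- The point `m ∈ {1, …, n}` is matched (lies on a cup) in `C`. -/
def Matched (n : ℕ) (C : CrossinglessMatching n) (m : ℕ) : Prop :=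
  ∃ p ∈ C.cups, m = p.1 ∨ m = p.2

/-- A standard tableau of shape `(n-k, k)`: a filling of the two-row Young diagram by
the numbers `1, …, n`, each used exactly once, with rows and columns strictly
decreasing read from the top left. -/
structure StandardTableau (n k : ℕ) where
  top : Fin (n - k) → ℕ
  bot : Fin k → ℕ
  top_strict : ∀ i j : Fin (n - k), i < j → top j < top i
  bot_strict : ∀ i j : Fin k, i < j → bot j < bot i
  col_strict : ∀ (i : Fin (n - k)) (j : Fin k), i.val = j.val → bot j < top i
  mem_iff : ∀ m : ℕ, (1 ≤ m ∧ m ≤ n) ↔ ((∃ i, top i = m) ∨ (∃ j, bot j = m))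
  top_ne_bot : ∀ (i : Fin (n - k)) (j : Fin k), top i ≠ bot j

/-- `C` is the crossingless matching `m(S)` associated with the standard tableau `S`:
it has `k` cups and its left cup endpoints are exactly the bottom-row entries of `S`. -/
def IsMatchOf (n k : ℕ) (S : StandardTableau n k) (C : CrossinglessMatching n) : Prop :=
  C.cups.card = k ∧ ∀ m : ℕ, (∃ p ∈ C.cups, p.1 = m) ↔ ∃ j, S.bot j = m

/-- The weight sequence of a standard tableau: `∨` (i.e. `true`) exactly on the
bottom-row entries. -/
def tabWeight (n k : ℕ) (S : StandardTableau n k) : Fin n → Bool :=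
  fun j => decide (∃ i, S.bot i = j.val + 1)

/-- The cup conditions cutting out `Y_S`: for every cup `(i, σ i)` of the matching,
`N ^ δ i (F (σ i)) = F (i - 1)` where `δ i = (σ i - i + 1)/2`. -/
def CupCond (n k : ℕ) (C : CrossinglessMatching n)
    (F : Fin (n + 1) → Submodule ℂ (Fin n → ℂ)) : Prop :=
  ∀ p ∈ C.cups, ∀ (h1 : p.1 - 1 < n + 1) (h2 : p.2 < n + 1),
    Submodule.map ((Nmap n k) ^ ((p.2 - p.1 + 1) / 2)) (F ⟨p.2, h2⟩) = F ⟨p.1 - 1, h1⟩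

/-- The ray conditions cutting out `Y_S` (for the weight sequence of `S`): for every
ray `m` of the matching, `F m = (N ^ b m)⁻¹ (range (N ^ (n - k - t m + b m)))`. -/
def RayCond (n k : ℕ) (w : Fin n → Bool) (C : CrossinglessMatching n)
    (F : Fin (n + 1) → Submodule ℂ (Fin n → ℂ)) : Prop :=
  ∀ m : ℕ, 1 ≤ m → ∀ hm : m < n + 1, ¬ Matched n C m →
    F ⟨m, hm⟩ = Submodule.comap ((Nmap n k) ^ (bcount n w m))
      (LinearMap.range ((Nmap n k) ^ (n - k - tcount n w m + bcount n w m)))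

/-- Membership in the (Spaltenstein–Vargas–Fung) component `Y_S`, where `C = m(S)`. -/
def InYS (n k : ℕ) (S : StandardTableau n k) (C : CrossinglessMatching n)
    (F : Fin (n + 1) → Submodule ℂ (Fin n → ℂ)) : Prop :=
  IsNFlag n k F ∧ CupCond n k C F ∧ RayCond n k (tabWeight n k S) C F

/-- The weight sequence `v` orients the crossingless matching `C`: opposite labels at
the two endpoints of every cup, and `∧` at every ray. -/
def OrientsMatching (n : ℕ) (v : Fin n → Bool) (C : CrossinglessMatching n) : Prop :=
  (∀ p ∈ C.cups, ∀ (h1 : p.1 - 1 < n) (h2 : p.2 - 1 < n),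
      v ⟨p.1 - 1, h1⟩ ≠ v ⟨p.2 - 1, h2⟩) ∧
  (∀ m : ℕ, 1 ≤ m → m ≤ n → ¬ Matched n C m → ∀ h : m - 1 < n, v ⟨m - 1, h⟩ = false)

/-- `C` is the matching `m(w)` produced from the weight sequence `w` by repeatedly
joining a pair `i < j` with `w i = ∨`, `w j = ∧` and all points strictly between them
already matched, until no such pair remains. -/
def IsMw (n : ℕ) (w : Fin n → Bool) (C : CrossinglessMatching n) : Prop :=
  (∀ p ∈ C.cups, ∀ (h1 : p.1 - 1 < n) (h2 : p.2 - 1 < n),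
      w ⟨p.1 - 1, h1⟩ = true ∧ w ⟨p.2 - 1, h2⟩ = false) ∧
  ¬ ∃ i j : ℕ, 1 ≤ i ∧ i < j ∧ j ≤ n ∧ ¬ Matched n C i ∧ ¬ Matched n C j ∧
      (∀ h : i - 1 < n, w ⟨i - 1, h⟩ = true) ∧ (∀ h : j - 1 < n, w ⟨j - 1, h⟩ = false) ∧
      (∀ m : ℕ, i < m → m < j → Matched n C m)

/-- `Cw` is the completed matching `C(w)`: a crossingless matching with `k` cups
containing `m(w) = Cm` on whose every cup `w` puts opposite labels. -/
def IsCw (n k : ℕ) (w : Fin n → Bool) (Cm Cw : CrossinglessMatching n) : Prop :=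
  Cm.cups ⊆ Cw.cups ∧ Cw.cups.card = k ∧
  ∀ p ∈ Cw.cups, ∀ (h1 : p.1 - 1 < n) (h2 : p.2 - 1 < n),
    w ⟨p.1 - 1, h1⟩ ≠ w ⟨p.2 - 1, h2⟩

/-- Membership in the closed attracting set `St(w)`, where `S = S(w)` and `Cw = C(w)`:
a flag of `Y_{S(w)}` such that `F i = Φ(w) i` for every `i` with `w i = ∧` which is a
left cup endpoint of `C(w)`. -/
def InSt (n k : ℕ) (w : Fin n → Bool) (S : StandardTableau n k)
    (Cw : CrossinglessMatching n) (F : Fin (n + 1) → Submodule ℂ (Fin n → ℂ)) : Prop :=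
  InYS n k S Cw F ∧
  ∀ i : ℕ, ∀ hi : i < n + 1, (∀ h : i - 1 < n, w ⟨i - 1, h⟩ = false) →
    (∃ p ∈ Cw.cups, p.1 = i) → F ⟨i, hi⟩ = PhiFlag n k w ⟨i, hi⟩

/-- The generating relation of `∼_C`: `a ∼ σ(a+1)` whenever `a+1` is a left cup
endpoint of `C`. -/
def cupRel (n : ℕ) (C : CrossinglessMatching n) (a b : ℕ) : Prop :=
  ∃ p ∈ C.cups, p.1 = a + 1 ∧ p.2 = b

/-- The equivalence relation `∼_C` on `{0, 1, …, n}`. -/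
def simRel (n : ℕ) (C : CrossinglessMatching n) : ℕ → ℕ → Prop :=
  Relation.EqvGen (cupRel n C)

/-- The equivalence relation `≈_{C,D}` on `{0, 1, …, n}` generated by `∼_C` and `∼_D`. -/
def approxRel (n : ℕ) (C D : CrossinglessMatching n) : ℕ → ℕ → Prop :=
  Relation.EqvGen (fun a b => cupRel n C a b ∨ cupRel n D a b)

/-- Adjacency in the glued diagram `D̄C`: `i` and `j` are joined by a cup of `C` or of `D`. -/
def Adj (n : ℕ) (C D : CrossinglessMatching n) (i j : ℕ) : Prop :=
  (i, j) ∈ C.cups ∨ (j, i) ∈ C.cups ∨ (i, j) ∈ D.cups ∨ (j, i) ∈ D.cups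

/-- Lying in the same connected component of the glued diagram `D̄C`. -/
def Conn (n : ℕ) (C D : CrossinglessMatching n) : ℕ → ℕ → Prop :=
  Relation.EqvGen (Adj n C D)

/-- The component of `v` in the glued diagram is a circle: every vertex of the
component is matched both in `C` and in `D`. -/
def IsCircleComp (n : ℕ) (C D : CrossinglessMatching n) (v : ℕ) : Prop :=
  ∀ u, Conn n C D u v → Matched n C u ∧ Matched n D u

/-- `v` is the leftmost vertex of its connected component (circle or line) of the
glued diagram. -/
def IsLeftmost (n : ℕ) (C D : CrossinglessMatching n) (v : ℕ) : Prop :=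
  1 ≤ v ∧ v ≤ n ∧ ∀ u, 1 ≤ u → Conn n C D u v → v ≤ u

/-- An orientation of the glued diagram `D̄C` (with `C = m(w)` and `D = m(w')`):
a weight sequence assigning opposite labels to the endpoints of every cup of `C` and
of `D`, agreeing with `w` at every ray of `C` and with `w'` at every ray of `D`. -/
def OrientsGlued (n k : ℕ) (w w' : Fin n → Bool) (C D : CrossinglessMatching n)
    (v : Fin n → Bool) : Prop :=
  IsWeightSeq n k v ∧
  (∀ p ∈ C.cups, ∀ (h1 : p.1 - 1 < n) (h2 : p.2 - 1 < n),
      v ⟨p.1 - 1, h1⟩ ≠ v ⟨p.2 - 1, h2⟩) ∧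
  (∀ p ∈ D.cups, ∀ (h1 : p.1 - 1 < n) (h2 : p.2 - 1 < n),
      v ⟨p.1 - 1, h1⟩ ≠ v ⟨p.2 - 1, h2⟩) ∧
  (∀ i : Fin n, ¬ Matched n C (i.val + 1) → v i = w i) ∧
  (∀ i : Fin n, ¬ Matched n D (i.val + 1) → v i = w' i)

/-- The component of `v0` in the glued diagram is orientable: it admits a labeling of
its vertices by `∧, ∨`, opposite across every edge, agreeing with `w` at every vertex
which is a ray of `C` and with `w'` at every vertex which is a ray of `D`. -/
def ComponentOrientable (n : ℕ) (w w' : Fin n → Bool) (C D : CrossinglessMatching n)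
    (v0 : ℕ) : Prop :=
  ∃ g : ℕ → Bool,
    (∀ i j, Conn n C D i v0 → Adj n C D i j → g i ≠ g j) ∧
    (∀ i, Conn n C D i v0 → 1 ≤ i → i ≤ n → ¬ Matched n C i →
      ∀ h : i - 1 < n, g i = w ⟨i - 1, h⟩) ∧
    (∀ i, Conn n C D i v0 → 1 ≤ i → i ≤ n → ¬ Matched n D i →
      ∀ h : i - 1 < n, g i = w' ⟨i - 1, h⟩)

/-- A walk in the glued multigraph `D̄C` from `a` to `b`: a list of edges, each tagged
by `true` (an edge of `C`) or `false` (an edge of `D`), consecutively incident. -/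
def IsGluedWalk (n : ℕ) (C D : CrossinglessMatching n) : ℕ → ℕ → List (Bool × ℕ × ℕ) → Prop
  | a, b, [] => a = b
  | a, b, e :: es =>
      (if e.1 = true then (e.2.1, e.2.2) ∈ C.cups else (e.2.1, e.2.2) ∈ D.cups) ∧
      ((a = e.2.1 ∧ IsGluedWalk n C D e.2.2 b es) ∨ (a = e.2.2 ∧ IsGluedWalk n C D e.2.1 b es))

/-- The standard flag of `ℂ^n`. -/
noncomputable def stdFlag (n k : ℕ) : Fin (n + 1) → Submodule ℂ (Fin n → ℂ) :=
  fun i => spanPQ n k (min i.val (n - k)) (i.val - (n - k))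


/-!
Since `ker π_Q = P`, rank–nullity gives `dim (F i ∩ P) + dim π_Q (F i) = i`. Both summands are
`N`-stable (`F i` is, and `π_Q` commutes with `N`), and an `N`-stable subspace of dimension `d` of a
single Jordan block is killed by `N ^ d`, hence is spanned by the first `d` vectors of the block.
So `F' i = span (p 1, …, p (a i), q 1, …, q (b i))` with `a`, `b` monotone and `a i + b i = i`,
which is `Φ(w)` for the `w` marking the steps where `b` grows. Every `Φ(w)` is a torus-fixed
`N`-flag, and `w` is recovered from `Φ(w)` through `b i = dim (Φ(w) i ∩ Q)`.
-/

open Finset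

theorem _root_.Module.End.pow_finrank_apply_eq_zero {K V : Type*} [Field K] [AddCommGroup V]
    [Module K V] [FiniteDimensional K V] {f : End K V} (hf : IsNilpotent f) {W : Submodule K V}
    (hW : W.map f ≤ W) {x : V} (hx : x ∈ W) : (f ^ finrank K W) x = 0 := by
  have hmaps : ∀ y ∈ W, f y ∈ W := fun y hy => hW (Submodule.mem_map_of_mem hy)
  have hg : f.restrict hmaps ^ finrank K W = 0 := by
    simpa only [(Module.End.isNilpotent.restrict hmaps hf).charpoly_eq_X_pow_finrank, map_pow,
      Polynomial.aeval_X] using (f.restrict hmaps).aeval_self_charpoly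
  have := congrArg Subtype.val (LinearMap.congr_fun hg ⟨x, hx⟩)
  rwa [Module.End.pow_restrict, LinearMap.restrict_apply] at this

theorem _root_.Submodule.finrank_inf_ker_add_finrank_map {K V V₂ : Type*} [Field K]
    [AddCommGroup V] [Module K V] [AddCommGroup V₂] [Module K V₂] (f : V →ₗ[K] V₂)
    (W : Submodule K V) [FiniteDimensional K W] :
    finrank K ↥(W ⊓ LinearMap.ker f) + finrank K ↥(W.map f) = finrank K W := by
  have h := LinearMap.finrank_range_add_finrank_ker (f.domRestrict W)
  rw [LinearMap.range_domRestrict, LinearMap.ker_domRestrict] at h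
  rw [← h, add_comm, ← Submodule.map_comap_subtype, Submodule.finrank_map_subtype_eq]

section Coordinates

def coordSub (n : ℕ) (s : ℕ → Prop) : Submodule ℂ (Fin n → ℂ) where
  carrier := {x | ∀ j : Fin n, ¬ s j.val → x j = 0}
  add_mem' hx hy j hj := by simp [hx j hj, hy j hj]
  zero_mem' _ _ := rfl
  smul_mem' c _ hx j hj := by simp [hx j hj]

variable {n : ℕ}

theorem mem_coordSub {s : ℕ → Prop} {x : Fin n → ℂ} :
    x ∈ coordSub n s ↔ ∀ j : Fin n, ¬ s j.val → x j = 0 := Iff.rfl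

theorem coordSub_mono {s t : ℕ → Prop} (h : ∀ m < n, s m → t m) :
    coordSub n s ≤ coordSub n t :=
  fun _ hx j hj => hx j fun hs => hj (h j j.isLt hs)

theorem coordSub_congr {s t : ℕ → Prop} (h : ∀ m < n, (s m ↔ t m)) :
    coordSub n s = coordSub n t :=
  le_antisymm (coordSub_mono fun m hm => (h m hm).1) (coordSub_mono fun m hm => (h m hm).2)

theorem coordSub_inf (s t : ℕ → Prop) :
    coordSub n s ⊓ coordSub n t = coordSub n (fun m => s m ∧ t m) := by
  ext x
  simp only [Submodule.mem_inf, mem_coordSub]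
  refine ⟨fun ⟨hs, ht⟩ j hj => ?_, fun h => ⟨fun j hj => h j (hj ·.1), fun j hj => h j (hj ·.2)⟩⟩
  by_cases hsj : s j.val
  · exact ht j fun htj => hj ⟨hsj, htj⟩
  · exact hs j hsj

def coordSubEquiv (s : ℕ → Prop) [DecidablePred s] :
    coordSub n s ≃ₗ[ℂ] ({j : Fin n // s j.val} → ℂ) where
  toFun x j := x.1 j.1
  map_add' _ _ := rfl
  map_smul' _ _ := rfl
  invFun y := ⟨fun j => if h : s j.val then y ⟨j, h⟩ else 0, fun _ hj => dif_neg hj⟩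
  left_inv x := by
    ext j
    by_cases h : s j.val
    · exact dif_pos h
    · exact (dif_neg h).trans (x.2 j h).symm
  right_inv y := funext fun j => dif_pos j.2

theorem finrank_coordSub (s : ℕ → Prop) [DecidablePred s] :
    finrank ℂ (coordSub n s) = ((range n).filter s).card := by
  rw [(coordSubEquiv s).finrank_eq, Module.finrank_pi, Fintype.card_subtype,
    ← card_map Fin.valEmbedding]
  congr 1
  ext m
  simp only [mem_map, mem_filter, mem_univ, true_and, mem_range, Fin.valEmbedding_apply]
  exact ⟨fun ⟨j, hj, hjm⟩ => hjm ▸ ⟨j.isLt, hj⟩, fun ⟨hm, hs⟩ => ⟨⟨m, hm⟩, hs, rfl⟩⟩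

end Coordinates

section Blocks

variable {n k : ℕ}

theorem Nmap_apply (x : Fin n → ℂ) (j : Fin n) :
    Nmap n k x j = if h : j.val + 1 < n ∧ j.val + 1 ≠ n - k then x ⟨j.val + 1, h.1⟩ else 0 :=
  rfl

theorem Nmap_pow_apply (d : ℕ) (x : Fin n → ℂ) (j : Fin n) :
    (Nmap n k ^ d) x j =
      if h : j.val + d < n ∧ (j.val + d < n - k ∨ n - k ≤ j.val) then x ⟨j.val + d, h.1⟩
      else 0 := by
  induction d generalizing x with
  | zero =>
    rw [pow_zero, dif_pos ⟨by simp, by omega⟩]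
    rfl
  | succ d ih =>
    rw [pow_succ, Module.End.mul_apply, ih]
    by_cases h1 : j.val + d < n ∧ (j.val + d < n - k ∨ n - k ≤ j.val)
    · rw [dif_pos h1, Nmap_apply]
      by_cases h2 : j.val + d + 1 < n ∧ j.val + d + 1 ≠ n - k
      · rw [dif_pos h2, dif_pos ⟨by omega, by omega⟩]
        rfl
      · rw [dif_neg h2, dif_neg (by omega)]
    · rw [dif_neg h1, dif_neg (by omega)]

theorem isNilpotent_Nmap : IsNilpotent (Nmap n k) :=
  ⟨n, LinearMap.ext fun x => funext fun j => by rw [Nmap_pow_apply, dif_neg (by omega)]; rfl⟩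

theorem projQ_apply (x : Fin n → ℂ) (j : Fin n) :
    projQ n k x j = if n - k ≤ j.val then x j else 0 :=
  rfl

theorem Nmap_comp_projQ : Nmap n k ∘ₗ projQ n k = projQ n k ∘ₗ Nmap n k := by
  ext x j
  simp only [LinearMap.comp_apply, projQ_apply, Nmap_apply]
  split_ifs <;> first | rfl | omega

theorem spanPQ_eq_coordSub (t b : ℕ) :
    spanPQ n k t b
      = coordSub n (fun m => (m < t ∧ m < n - k) ∨ (n - k ≤ m ∧ m < n - k + b)) := by
  apply le_antisymm
  · rw [spanPQ, Submodule.span_le]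
    rintro _ ⟨j, hj, rfl⟩ j' hj'
    have hne : j' ≠ j := by
      rintro rfl
      exact hj' hj
    exact Pi.single_eq_of_ne hne 1
  · intro x hx
    rw [← Finset.univ_sum_single x]
    refine Submodule.sum_mem _ fun j _ => ?_
    by_cases h : (j.val < t ∧ j.val < n - k) ∨ (n - k ≤ j.val ∧ j.val < n - k + b)
    · rw [← mul_one (x j), ← smul_eq_mul, Pi.single_smul]
      exact Submodule.smul_mem _ _ (Submodule.subset_span ⟨j, h, rfl⟩)
    · rw [hx j h, Pi.single_zero]
      exact Submodule.zero_mem _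

theorem spanPQ_mono {t t' b b' : ℕ} (ht : t ≤ t') (hb : b ≤ b') :
    spanPQ n k t b ≤ spanPQ n k t' b' := by
  rw [spanPQ_eq_coordSub, spanPQ_eq_coordSub]
  exact coordSub_mono fun m _ => by omega

theorem spanPQ_sup (t b : ℕ) : spanPQ n k t 0 ⊔ spanPQ n k 0 b = spanPQ n k t b := by
  rw [spanPQ, spanPQ, spanPQ, ← Submodule.span_union]
  congr 1
  ext x
  simp only [Set.mem_union, Set.mem_ofPred_eq]
  constructor
  · rintro (⟨j, hj, rfl⟩ | ⟨j, hj, rfl⟩) <;> exact ⟨j, by omega, rfl⟩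
  · rintro ⟨j, hj, rfl⟩
    by_cases hc : j.val < t ∧ j.val < n - k
    · exact Or.inl ⟨j, by omega, rfl⟩
    · exact Or.inr ⟨j, by omega, rfl⟩

theorem spanPQ_inf_Pmod (t b : ℕ) : spanPQ n k t b ⊓ Pmod n k = spanPQ n k t 0 := by
  rw [Pmod, spanPQ_eq_coordSub, spanPQ_eq_coordSub, spanPQ_eq_coordSub, coordSub_inf]
  exact coordSub_congr fun m _ => by omega

theorem spanPQ_inf_Qmod (t b : ℕ) : spanPQ n k t b ⊓ Qmod n k = spanPQ n k 0 b := by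
  rw [Qmod, spanPQ_eq_coordSub, spanPQ_eq_coordSub, spanPQ_eq_coordSub, coordSub_inf]
  exact coordSub_congr fun m _ => by omega

theorem finrank_spanPQ {t b : ℕ} (ht : t ≤ n - k) (hb : n - k + b ≤ n) :
    finrank ℂ (spanPQ n k t b) = t + b := by
  classical
  rw [spanPQ_eq_coordSub, finrank_coordSub]
  have hsplit : (range n).filter (fun m => (m < t ∧ m < n - k) ∨ (n - k ≤ m ∧ m < n - k + b))
      = range t ∪ Ico (n - k) (n - k + b) := by
    ext m
    simp only [mem_filter, mem_range, mem_union, mem_Ico]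
    omega
  rw [hsplit, card_union_of_disjoint, card_range, Nat.card_Ico, Nat.add_sub_cancel_left]
  exact disjoint_left.2 fun m hm hm' => by simp only [mem_range, mem_Ico] at hm hm'; omega

theorem map_Nmap_spanPQ_le (t b : ℕ) :
    (spanPQ n k (t + 1) (b + 1)).map (Nmap n k) ≤ spanPQ n k t b := by
  rw [spanPQ_eq_coordSub, spanPQ_eq_coordSub]
  rintro _ ⟨x, hx, rfl⟩ j hj
  rw [Nmap_apply]
  split_ifs
  · exact hx _ (by simp only; omega)
  · rfl

theorem map_Nmap_spanPQ_le_self (t b : ℕ) :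
    (spanPQ n k t b).map (Nmap n k) ≤ spanPQ n k t b :=
  (Submodule.map_mono (spanPQ_mono t.le_succ b.le_succ)).trans (map_Nmap_spanPQ_le t b)

theorem mem_spanPQ_min_of_Nmap_pow_apply_eq_zero {t b d : ℕ} {x : Fin n → ℂ}
    (hx : x ∈ spanPQ n k t b) (hd : (Nmap n k ^ d) x = 0) :
    x ∈ spanPQ n k (min t d) (min b d) := by
  rw [spanPQ_eq_coordSub] at hx ⊢
  intro j hj
  by_cases hjd : d ≤ j.val ∧ (j.val < n - k ∨ n - k + d ≤ j.val)
  · have h := congrFun hd ⟨j.val - d, by omega⟩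
    rwa [Nmap_pow_apply, dif_pos ⟨by simp only; omega, by simp only; omega⟩, Pi.zero_apply,
      show (⟨j.val - d + d, _⟩ : Fin n) = j from Fin.ext (Nat.sub_add_cancel hjd.1)] at h
  · exact hx j (by omega)

theorem eq_spanPQ_finrank_of_le_Pmod {W : Submodule ℂ (Fin n → ℂ)} (hW : W ≤ Pmod n k)
    (hN : W.map (Nmap n k) ≤ W) : finrank ℂ W ≤ n - k ∧ W = spanPQ n k (finrank ℂ W) 0 := by
  set d := finrank ℂ W
  have hle : W ≤ spanPQ n k (min (n - k) d) 0 := fun x hx => by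
    simpa using mem_spanPQ_min_of_Nmap_pow_apply_eq_zero (hW hx)
      (Module.End.pow_finrank_apply_eq_zero isNilpotent_Nmap hN hx)
  have hd : d ≤ n - k := by
    have := Submodule.finrank_mono hle
    rw [finrank_spanPQ (min_le_left _ _) (by omega)] at this
    omega
  rw [min_eq_right hd] at hle
  exact ⟨hd, Submodule.eq_of_le_of_finrank_le hle (by rw [finrank_spanPQ hd (by omega)]; omega)⟩

theorem eq_spanPQ_finrank_of_le_Qmod (hk : k ≤ n) {W : Submodule ℂ (Fin n → ℂ)}
    (hW : W ≤ Qmod n k) (hN : W.map (Nmap n k) ≤ W) :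
    finrank ℂ W ≤ k ∧ W = spanPQ n k 0 (finrank ℂ W) := by
  set d := finrank ℂ W
  have hle : W ≤ spanPQ n k 0 (min k d) := fun x hx => by
    simpa using mem_spanPQ_min_of_Nmap_pow_apply_eq_zero (hW hx)
      (Module.End.pow_finrank_apply_eq_zero isNilpotent_Nmap hN hx)
  have hd : d ≤ k := by
    have := Submodule.finrank_mono hle
    rw [finrank_spanPQ (Nat.zero_le _) (by omega)] at this
    omega
  rw [min_eq_right hd] at hle
  exact ⟨hd, Submodule.eq_of_le_of_finrank_le hle
    (by rw [finrank_spanPQ (Nat.zero_le _) (by omega)]; omega)⟩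

end Blocks

section Weights

variable {n k : ℕ}

theorem card_filter_lt_succ (w : Fin n → Bool) (c : Bool) {i : ℕ} (hi : i < n) :
    (univ.filter fun j : Fin n => j.val < i + 1 ∧ w j = c).card
      = (univ.filter fun j : Fin n => j.val < i ∧ w j = c).card
        + if w ⟨i, hi⟩ = c then 1 else 0 := by
  simp only [card_filter]
  rw [← Fintype.sum_ite_eq' (⟨i, hi⟩ : Fin n) (fun j => if w j = c then 1 else 0),
    ← sum_add_distrib]
  refine sum_congr rfl fun j _ => ?_
  by_cases hj : j = ⟨i, hi⟩
  · subst hj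
    simp
  · have : j.val < i + 1 ↔ j.val < i := by
      have : j.val ≠ i := fun h => hj (Fin.ext h)
      omega
    simp [hj, this]

theorem bcount_succ (w : Fin n → Bool) {i : ℕ} (hi : i < n) :
    bcount n w (i + 1) = bcount n w i + (w ⟨i, hi⟩).toNat := by
  rw [bcount, bcount, card_filter_lt_succ w true hi]
  cases w ⟨i, hi⟩ <;> rfl

theorem tcount_succ (w : Fin n → Bool) {i : ℕ} (hi : i < n) :
    tcount n w (i + 1) = tcount n w i + (!w ⟨i, hi⟩).toNat := by
  rw [tcount, tcount, card_filter_lt_succ w false hi]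
  cases w ⟨i, hi⟩ <;> rfl

theorem tcount_add_bcount (w : Fin n → Bool) {i : ℕ} (hi : i ≤ n) :
    tcount n w i + bcount n w i = i := by
  induction i with
  | zero => simp [tcount, bcount]
  | succ i ih =>
    rw [tcount_succ w hi, bcount_succ w hi]
    have := ih (by omega)
    cases w ⟨i, hi⟩ <;> simp <;> omega

theorem tcount_mono (w : Fin n → Bool) : Monotone (tcount n w) := fun _ _ h =>
  card_le_card (monotone_filter_right _ fun _ _ hj => ⟨hj.1.trans_le h, hj.2⟩)

theorem bcount_mono (w : Fin n → Bool) : Monotone (bcount n w) := fun _ _ h =>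
  card_le_card (monotone_filter_right _ fun _ _ hj => ⟨hj.1.trans_le h, hj.2⟩)

theorem isWeightSeq_iff_bcount_eq {w : Fin n → Bool} : IsWeightSeq n k w ↔ bcount n w n = k := by
  rw [IsWeightSeq, bcount]
  simp only [Fin.is_lt, true_and]

theorem IsWeightSeq.bcount_le {w : Fin n → Bool} (hw : IsWeightSeq n k w) (i : ℕ) :
    bcount n w i ≤ k :=
  hw ▸ card_le_card (monotone_filter_right _ fun _ _ hj => hj.2)

theorem IsWeightSeq.tcount_le {w : Fin n → Bool} (hw : IsWeightSeq n k w) {i : ℕ}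
    (hi : i ≤ n) : tcount n w i ≤ n - k := by
  have := tcount_mono w hi
  have := tcount_add_bcount w le_rfl
  have := isWeightSeq_iff_bcount_eq.1 hw
  omega

theorem eq_of_bcount_eq {w w' : Fin n → Bool} (h : ∀ i ≤ n, bcount n w i = bcount n w' i) :
    w = w' := by
  funext j
  have := h (j.val + 1) j.isLt
  rw [bcount_succ w j.isLt, bcount_succ w' j.isLt, h j.val j.isLt.le] at this
  revert this
  cases w j <;> cases w' j <;> simp

theorem exists_tcount_bcount_eq {a b : Fin (n + 1) → ℕ} (ha : Monotone a) (hb : Monotone b)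
    (hab : ∀ i, a i + b i = i) : ∃ w : Fin n → Bool, ∀ i : Fin (n + 1),
      tcount n w i = a i ∧ bcount n w i = b i := by
  set w : Fin n → Bool := fun j => decide (b j.succ = b j.castSucc + 1)
  have hbw : ∀ i : Fin (n + 1), bcount n w i = b i := by
    intro i
    induction i using Fin.induction with
    | zero =>
      have h0 : bcount n w 0 = 0 := by simp [bcount]
      have := hab 0
      simp only [Fin.val_zero] at this ⊢
      omega
    | succ j ih =>
      have h1 := hab j.succ
      have h2 := hab j.castSucc
      have h3 := ha (Fin.castSucc_lt_succ (i := j)).le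
      have h4 := hb (Fin.castSucc_lt_succ (i := j)).le
      simp only [Fin.val_castSucc, Fin.val_succ] at ih h1 h2
      rw [Fin.val_succ, bcount_succ w j.isLt, ih, Fin.eta]
      by_cases hs : b j.succ = b j.castSucc + 1
      · simp [w, hs]
      · simp only [w, hs, decide_false, Bool.toNat_false]
        omega
  refine ⟨w, fun i => ⟨?_, hbw i⟩⟩
  have := hbw i
  have := tcount_add_bcount w i.is_le
  have := hab i
  omega

end Weights

section PhiFlag

variable {n k : ℕ}

theorem torusFixed_PhiFlag (w : Fin n → Bool) : TorusFixed n k (PhiFlag n k w) := fun i => by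
  simp only [PhiFlag, spanPQ_inf_Pmod, spanPQ_inf_Qmod, spanPQ_sup]

theorem isNFlag_PhiFlag {w : Fin n → Bool} (hw : IsWeightSeq n k w) :
    IsNFlag n k (PhiFlag n k w) := by
  refine ⟨fun i i' h => spanPQ_mono (tcount_mono w h) (bcount_mono w h), fun i => ?_, fun i => ?_⟩
  · have := hw.bcount_le i
    have := hw.tcount_le i.is_le
    have := tcount_add_bcount w i.is_le
    rw [PhiFlag, finrank_spanPQ (by omega) (by omega), tcount_add_bcount w i.is_le]
  · refine (Submodule.map_mono (spanPQ_mono ?_ ?_)).trans (map_Nmap_spanPQ_le _ _)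
    · rw [Fin.val_succ, tcount_succ w i.isLt]
      exact Nat.add_le_add_left (Bool.toNat_le _) _
    · rw [Fin.val_succ, bcount_succ w i.isLt]
      exact Nat.add_le_add_left (Bool.toNat_le _) _

theorem finrank_PhiFlag_inf_Qmod {w : Fin n → Bool} (hw : IsWeightSeq n k w)
    (i : Fin (n + 1)) : finrank ℂ ↥(PhiFlag n k w i ⊓ Qmod n k) = bcount n w i := by
  have := hw.bcount_le i
  have := tcount_add_bcount w i.is_le
  rw [PhiFlag, spanPQ_inf_Qmod, finrank_spanPQ (Nat.zero_le _) (by omega), zero_add]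

theorem PhiFlag_injective {w w' : Fin n → Bool} (hw : IsWeightSeq n k w)
    (hw' : IsWeightSeq n k w') (h : PhiFlag n k w = PhiFlag n k w') : w = w' :=
  eq_of_bcount_eq fun i hi => calc
    bcount n w i = finrank ℂ ↥(PhiFlag n k w ⟨i, by omega⟩ ⊓ Qmod n k) :=
      (finrank_PhiFlag_inf_Qmod hw ⟨i, by omega⟩).symm
    _ = bcount n w' i := by rw [h]; exact finrank_PhiFlag_inf_Qmod hw' ⟨i, by omega⟩

end PhiFlag

section LimitFlag

noncomputable def limitFlag (n k : ℕ) (F : Fin (n + 1) → Submodule ℂ (Fin n → ℂ)) :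
    Fin (n + 1) → Submodule ℂ (Fin n → ℂ) :=
  fun i => (F i ⊓ Pmod n k) ⊔ Submodule.map (projQ n k) (F i)

variable {n k : ℕ}

theorem ker_projQ : LinearMap.ker (projQ n k) = Pmod n k := by
  rw [Pmod, spanPQ_eq_coordSub]
  ext x
  simp only [LinearMap.mem_ker, mem_coordSub, funext_iff, projQ_apply, Pi.zero_apply]
  refine forall_congr' fun j => ?_
  by_cases hj : n - k ≤ j.val
  · simp [hj]
  · simp [hj, show j.val < n - k by omega]

theorem map_projQ_le_Qmod (W : Submodule ℂ (Fin n → ℂ)) : W.map (projQ n k) ≤ Qmod n k := by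
  rw [Qmod, spanPQ_eq_coordSub]
  rintro _ ⟨x, -, rfl⟩ j hj
  rw [projQ_apply, if_neg (by omega)]

theorem IsNFlag.map_Nmap_le_self {F : Fin (n + 1) → Submodule ℂ (Fin n → ℂ)}
    (hF : IsNFlag n k F) (i : Fin (n + 1)) : (F i).map (Nmap n k) ≤ F i := by
  cases i using Fin.cases with
  | zero =>
    rw [Submodule.finrank_eq_zero.1 (hF.2.1 0), Submodule.map_bot]
  | succ j => exact (hF.2.2 j).trans (hF.1 (Fin.castSucc_lt_succ (i := j)).le)

theorem limitFlag_apply_eq_spanPQ (hk : k ≤ n) {F : Fin (n + 1) → Submodule ℂ (Fin n → ℂ)}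
    (hF : IsNFlag n k F) (i : Fin (n + 1)) :
    finrank ℂ ↥(F i ⊓ Pmod n k) ≤ n - k ∧ finrank ℂ ↥((F i).map (projQ n k)) ≤ k ∧
      limitFlag n k F i
        = spanPQ n k (finrank ℂ ↥(F i ⊓ Pmod n k)) (finrank ℂ ↥((F i).map (projQ n k))) := by
  have hP := eq_spanPQ_finrank_of_le_Pmod (W := F i ⊓ Pmod n k) inf_le_right
    ((Submodule.map_inf_le _).trans
      (inf_le_inf (hF.map_Nmap_le_self i) (map_Nmap_spanPQ_le_self _ _)))
  have hQ := eq_spanPQ_finrank_of_le_Qmod hk (map_projQ_le_Qmod (F i)) (by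
    rw [← Submodule.map_comp, Nmap_comp_projQ, Submodule.map_comp]
    exact Submodule.map_mono (hF.map_Nmap_le_self i))
  refine ⟨hP.1, hQ.1, ?_⟩
  rw [← spanPQ_sup, ← hP.2, ← hQ.2]
  rfl

theorem exists_isWeightSeq_limitFlag_eq_PhiFlag (hk : k ≤ n)
    {F : Fin (n + 1) → Submodule ℂ (Fin n → ℂ)} (hF : IsNFlag n k F) :
    ∃ w, IsWeightSeq n k w ∧ limitFlag n k F = PhiFlag n k w := by
  have hlim := limitFlag_apply_eq_spanPQ hk hF
  have hsum : ∀ i, finrank ℂ ↥(F i ⊓ Pmod n k) + finrank ℂ ↥((F i).map (projQ n k)) = i :=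
    fun i => by rw [← ker_projQ, Submodule.finrank_inf_ker_add_finrank_map, hF.2.1 i]
  obtain ⟨w, hw⟩ := exists_tcount_bcount_eq
    (fun _ _ h => Submodule.finrank_mono (inf_le_inf_right _ (hF.1 h)))
    (fun _ _ h => Submodule.finrank_mono (Submodule.map_mono (hF.1 h))) hsum
  refine ⟨w, isWeightSeq_iff_bcount_eq.2 ?_, funext fun i => ?_⟩
  · have := (hw (Fin.last n)).2
    have := hlim (Fin.last n)
    have := hsum (Fin.last n)
    simp only [Fin.val_last] at *
    omega
  · rw [(hlim i).2.2, PhiFlag, (hw i).1, (hw i).2]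

end LimitFlag

theorem limit_flag_is_fixed_general (n k : ℕ) (hkn : 2 * k ≤ n)
    (F : Fin (n + 1) → Submodule ℂ (Fin n → ℂ)) (hF : IsNFlag n k F) :
    IsNFlag n k (fun i => (F i ⊓ Pmod n k) ⊔ Submodule.map (projQ n k) (F i)) ∧
    TorusFixed n k (fun i => (F i ⊓ Pmod n k) ⊔ Submodule.map (projQ n k) (F i)) ∧
    ∃! w : Fin n → Bool, IsWeightSeq n k w ∧
      (fun i => (F i ⊓ Pmod n k) ⊔ Submodule.map (projQ n k) (F i)) = PhiFlag n k w := by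
  obtain ⟨w, hw, hF'⟩ := exists_isWeightSeq_limitFlag_eq_PhiFlag (by omega) hF
  change IsNFlag n k (limitFlag n k F) ∧ TorusFixed n k (limitFlag n k F) ∧
    ∃! w, IsWeightSeq n k w ∧ limitFlag n k F = PhiFlag n k w
  rw [hF']
  exact ⟨isNFlag_PhiFlag hw, torusFixed_PhiFlag w, w, ⟨hw, rfl⟩,
    fun w' hw' => PhiFlag_injective hw'.1 hw hw'.2.symm⟩

/-- For every complete `N`-invariant flag `F`, the subspaces
`F' i = (F i ∩ P) + π_Q (F i)` form a torus-fixed complete `N`-invariant flag;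
consequently `F' = Φ(w)` for a unique weight sequence `w`. -/
theorem limit_flag_is_fixed (n k : ℕ) (hn : 1 ≤ n) (hkn : 2 * k ≤ n)
    (F : Fin (n + 1) → Submodule ℂ (Fin n → ℂ)) (hF : IsNFlag n k F) :
    IsNFlag n k (fun i => (F i ⊓ Pmod n k) ⊔ Submodule.map (projQ n k) (F i)) ∧
    TorusFixed n k (fun i => (F i ⊓ Pmod n k) ⊔ Submodule.map (projQ n k) (F i)) ∧
    ∃! w : Fin n → Bool, IsWeightSeq n k w ∧
      (fun i => (F i ⊓ Pmod n k) ⊔ Submodule.map (projQ n k) (F i)) = PhiFlag n k w :=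
  limit_flag_is_fixed_general n k hkn F hF

end Springer
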